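/- arXiv:2403.07374 — 2 statements merged into one kernel-verified Lean document; each statement's English description precedes it below -/
import Mathlib

section
/- Let M be a cancellative semigroup of self-embeddings of a digraph D (injective maps on vertices preserving both edges and non-edges, composed as functions). Suppose m₁, m₂ ∈ M and U, V ⊆ V(D) satisfy U ∩ V = ∅, m₁(U ∪ V) ⊆ U, and m₂(U ∪ V) ⊆ V, with U ∪ V nonempty. Then m₁ and m₂ freely generate a free semigroup: any two words over {m₁, m₂} evaluating to the same self-embedding of D are equal as words. -/
/-- A self-embedding of a digraph with vertex set `V` and edge relation `E`:
an injective vertex map preserving edges and non-edges. -/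
def IsSelfEmbedding {V : Type*} (E : V → V → Prop) (g : V → V) : Prop :=
  Function.Injective g ∧ ∀ x y, E x y ↔ E (g x) (g y)

/-- Ping-pong lemma for a cancellative semigroup of self-embeddings of a digraph. -/
theorem stmt0 {V : Type*} (E : V → V → Prop) (M : Set (V → V))
    (hM_se : ∀ f ∈ M, IsSelfEmbedding E f)
    (hM_mul : ∀ f ∈ M, ∀ g ∈ M, f ∘ g ∈ M)
    (hM_cancel : ∀ a ∈ M, ∀ b ∈ M, ∀ c ∈ M,
      (a ∘ b = a ∘ c → b = c) ∧ (b ∘ a = c ∘ a → b = c))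
    (m₁ m₂ : V → V) (hm₁ : m₁ ∈ M) (hm₂ : m₂ ∈ M)
    (U W : Set V) (hdisj : U ∩ W = ∅)
    (h₁ : m₁ '' (U ∪ W) ⊆ U) (h₂ : m₂ '' (U ∪ W) ⊆ W)
    (hne : (U ∪ W).Nonempty) :
    ∀ w w' : List Bool,
      (w.map fun c => if c then m₁ else m₂).foldr (· ∘ ·) id =
        (w'.map fun c => if c then m₁ else m₂).foldr (· ∘ ·) id →
      w = w' := by
  obtain ⟨x, hx⟩ := hne
  set f : Bool → V → V := fun c => if c then m₁ else m₂ with hf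
  have hfU : ∀ (c : Bool) (y : V), y ∈ U ∪ W → f c y ∈ (if c then U else W) := by
    intro c y hy
    cases c with
    | true => exact h₁ ⟨y, hy, rfl⟩
    | false => exact h₂ ⟨y, hy, rfl⟩
  have hstay : ∀ (w : List Bool) (y : V), y ∈ U ∪ W →
      ((w.map f).foldr (· ∘ ·) id) y ∈ U ∪ W := by
    intro w
    induction w with
    | nil => intro y hy; exact hy
    | cons c t ih =>
      intro y hy
      have h := hfU c _ (ih y hy)
      cases c with
      | true => exact Or.inl (by simpa using h)
      | false => exact Or.inr (by simpa using h)
  have hhead : ∀ (c : Bool) (t : List Bool) (y : V), y ∈ U ∪ W →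
      (((c :: t).map f).foldr (· ∘ ·) id) y ∈ (if c then U else W) := by
    intro c t y hy
    have h := hfU c _ (hstay t y hy)
    simpa using h
  have hdisj' : ∀ z, z ∈ U → z ∈ W → False := by
    intro z h1 h2
    have hz : z ∈ U ∩ W := ⟨h1, h2⟩
    simp [hdisj] at hz
  have hne_id : ∀ (c : Bool) (t : List Bool),
      (((c :: t).map f).foldr (· ∘ ·) id) ≠ id := by
    intro c t hcontra
    cases c with
    | true =>
      have hsub : ∀ y ∈ U ∪ W, y ∈ U := by
        intro y hy
        have h := hhead true t y hy
        rw [hcontra] at h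
        simpa using h
      have h2x : m₂ x ∈ W := h₂ ⟨x, hx, rfl⟩
      exact hdisj' _ (hsub _ (Or.inr h2x)) h2x
    | false =>
      have hsub : ∀ y ∈ U ∪ W, y ∈ W := by
        intro y hy
        have h := hhead false t y hy
        rw [hcontra] at h
        simpa using h
      have h1x : m₁ x ∈ U := h₁ ⟨x, hx, rfl⟩
      exact hdisj' _ h1x (hsub _ (Or.inl h1x))
  intro w
  induction w with
  | nil =>
    intro w' h
    cases w' with
    | nil => rfl
    | cons c t => exact absurd h.symm (hne_id c t)
  | cons c t ih =>
    intro w' h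
    cases w' with
    | nil => exact absurd h (hne_id c t)
    | cons c' t' =>
      by_cases hcc : c = c'
      · subst hcc
        have hinj : Function.Injective (f c) := by
          cases c
          · simpa [hf] using (hM_se m₂ hm₂).1
          · simpa [hf] using (hM_se m₁ hm₁).1
        have heq : (t.map f).foldr (· ∘ ·) id = (t'.map f).foldr (· ∘ ·) id := by
          funext y
          apply hinj
          have h' := congrFun h y
          simpa using h'
        rw [ih _ heq]
      · exfalso
        have h1 := hhead c t x hx
        have h2 := hhead c' t' x hx
        rw [h] at h1
        cases c with
        | true =>
          cases c' with
          | true => exact hcc rfl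
          | false => exact hdisj' _ (by simpa using h1) (by simpa using h2)
        | false =>
          cases c' with
          | true => exact hdisj' _ (by simpa using h2) (by simpa using h1)
          | false => exact hcc rfl
end

section
/- Let D be a digraph with a root o (a vertex with d(o,v) < ∞ for all v) such that all in-balls and out-balls of finite radius around vertices are finite. Let g be a self-embedding of D that fixes some finite nonempty vertex set setwise. Then for every n ∈ ℕ there exists i ≥ 1 such that g^i fixes every vertex of B⁺_n(o) ∪ B⁻_n(o) pointwise. -/
/-- There is a directed walk of length at most `n` from `x` to `y` along the edge relation `E`. -/
def StepsLe {V : Type*} (E : V → V → Prop) : ℕ → V → V → Prop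
  | 0, x, y => x = y
  | n + 1, x, y => x = y ∨ ∃ z, E x z ∧ StepsLe E n z y

/-- The directed distance in the digraph with edge relation `E`, with value `⊤` if there is
no directed path. -/
noncomputable def ddist {V : Type*} (E : V → V → Prop) (x y : V) : ℕ∞ :=
  sInf {m : ℕ∞ | ∃ n : ℕ, m = (n : ℕ∞) ∧ StepsLe E n x y}

lemma stepsLe_self {V : Type*} (E : V → V → Prop) (n : ℕ) (x : V) : StepsLe E n x x := by
  cases n with
  | zero => rfl
  | succ n => exact Or.inl rfl

lemma stepsLe_mono {V : Type*} (E : V → V → Prop) {m n : ℕ} {x y : V}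
    (h : StepsLe E m x y) (hmn : m ≤ n) : StepsLe E n x y := by
  induction m generalizing n x y with
  | zero => cases h; exact stepsLe_self E n x
  | succ m ih =>
    rcases h with rfl | ⟨z, hz, hs⟩
    · exact stepsLe_self E n x
    · cases n with
      | zero => omega
      | succ n' => exact Or.inr ⟨z, hz, ih hs (by omega)⟩

lemma stepsLe_trans {V : Type*} (E : V → V → Prop) {m n : ℕ} {x y z : V}
    (h1 : StepsLe E m x y) (h2 : StepsLe E n y z) : StepsLe E (m + n) x z := by
  induction m generalizing x with
  | zero => cases h1; simpa using h2
  | succ m ih =>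
    rcases h1 with rfl | ⟨w, hw, hs⟩
    · exact stepsLe_mono E h2 (by omega)
    · have : StepsLe E (m + n) w z := ih hs
      have : StepsLe E ((m + n) + 1) x z := Or.inr ⟨w, hw, this⟩
      simpa [Nat.succ_add] using this

lemma stepsLe_map {V : Type*} {E : V → V → Prop} {g : V → V}
    (hg : ∀ x y, E x y → E (g x) (g y)) {n : ℕ} {x y : V}
    (h : StepsLe E n x y) : StepsLe E n (g x) (g y) := by
  induction n generalizing x with
  | zero => cases h; rfl
  | succ n ih =>
    rcases h with rfl | ⟨z, hz, hs⟩
    · exact Or.inl rfl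
    · exact Or.inr ⟨g z, hg _ _ hz, ih hs⟩

lemma ddist_le_iff {V : Type*} (E : V → V → Prop) (x y : V) (n : ℕ) :
    ddist E x y ≤ (n : ℕ∞) ↔ StepsLe E n x y := by
  constructor
  · intro h
    set S : Set ℕ∞ := {m : ℕ∞ | ∃ k : ℕ, m = (k : ℕ∞) ∧ StepsLe E k x y} with hS
    have hne : S.Nonempty := by
      by_contra hemp
      rw [Set.not_nonempty_iff_eq_empty] at hemp
      rw [ddist, ← hS, hemp, sInf_empty] at h
      exact (ENat.coe_lt_top n).not_ge h
    have hmem : sInf S ∈ S := csInf_mem hne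
    obtain ⟨k, hk, hsteps⟩ := hmem
    rw [ddist, ← hS, hk] at h
    exact stepsLe_mono E hsteps (by exact_mod_cast h)
  · intro h
    exact sInf_le ⟨n, rfl, h⟩

lemma ddist_map_le {V : Type*} {E : V → V → Prop} {g : V → V}
    (hg : ∀ x y, E x y → E (g x) (g y)) (x y : V) :
    ddist E (g x) (g y) ≤ ddist E x y := by
  apply sInf_le_sInf
  rintro m ⟨k, rfl, hs⟩
  exact ⟨k, rfl, stepsLe_map hg hs⟩

/-- An injective map sending a finite set into itself has a positive power fixing it
pointwise. -/
lemma exists_pow_fix {V : Type*} {S : Set V} (hS : S.Finite) {f : V → V}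
    (hf : Function.Injective f) (hmap : ∀ v ∈ S, f v ∈ S) :
    ∃ k : ℕ, 1 ≤ k ∧ ∀ v ∈ S, f^[k] v = v := by
  have hiter : ∀ (m : ℕ) (v : V), v ∈ S → f^[m] v ∈ S := by
    intro m
    induction m with
    | zero => intro v hv; simpa using hv
    | succ m ih =>
      intro v hv
      rw [Function.iterate_succ_apply]
      exact ih _ (hmap v hv)
  -- each point has a positive period
  have hper : ∀ v : V, ∃ k : ℕ, 1 ≤ k ∧ (v ∈ S → f^[k] v = v) := by
    intro v
    by_cases hv : v ∈ S
    · have hinf : (Set.univ : Set ℕ).Infinite := Set.infinite_univ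
      have hmt : Set.MapsTo (fun m : ℕ => f^[m] v) Set.univ S := by
        intro m _; exact hiter m v hv
      obtain ⟨a, _, b, _, hab, heq⟩ := hinf.exists_ne_map_eq_of_mapsTo hmt hS
      rcases hab.lt_or_gt with hlt | hlt
      · refine ⟨b - a, by omega, fun _ => ?_⟩
        have : f^[a] (f^[b - a] v) = f^[a] v := by
          rw [← Function.iterate_add_apply]
          have : a + (b - a) = b := by omega
          rw [this]; exact heq.symm
        exact (hf.iterate a) this
      · refine ⟨a - b, by omega, fun _ => ?_⟩
        have : f^[b] (f^[a - b] v) = f^[b] v := by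
          rw [← Function.iterate_add_apply]
          have : b + (a - b) = a := by omega
          rw [this]; exact heq
        exact (hf.iterate b) this
    · exact ⟨1, le_refl 1, fun h => absurd h hv⟩
  choose k hk1 hkfix using hper
  refine ⟨∏ v ∈ hS.toFinset, k v, Finset.one_le_prod' (fun v _ => hk1 v), ?_⟩
  intro v hv
  have hdvd : k v ∣ ∏ w ∈ hS.toFinset, k w :=
    Finset.dvd_prod_of_mem k (hS.mem_toFinset.mpr hv)
  obtain ⟨m, hm⟩ := hdvd
  rw [hm, Function.iterate_mul]
  exact Function.iterate_fixed (hkfix v hv) m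

lemma ddist_iterate_le {V : Type*} {E : V → V → Prop} {g : V → V}
    (hg : ∀ x y, E x y → E (g x) (g y)) (i : ℕ) (x y : V) :
    ddist E (g^[i] x) (g^[i] y) ≤ ddist E x y := by
  induction i with
  | zero => simp
  | succ i ih =>
    rw [Function.iterate_succ_apply', Function.iterate_succ_apply']
    exact le_trans (ddist_map_le hg _ _) ih

/-- For an elliptic self-embedding of a rooted digraph with finite balls, some power fixes
any given ball around the root pointwise. -/
theorem stmt3 {V : Type*} (E : V → V → Prop) (o : V)
    (hroot : ∀ v : V, ddist E o v ≠ ⊤)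
    (hballs : ∀ (v : V) (n : ℕ),
      {w : V | ddist E v w ≤ (n : ℕ∞)}.Finite ∧ {w : V | ddist E w v ≤ (n : ℕ∞)}.Finite)
    (g : V → V) (hg_inj : Function.Injective g)
    (hg_adj : ∀ x y, E x y ↔ E (g x) (g y))
    (hell : ∃ F : Set V, F.Finite ∧ F.Nonempty ∧ g '' F = F) :
    ∀ n : ℕ, ∃ i : ℕ, 1 ≤ i ∧
      ∀ v : V, (ddist E o v ≤ (n : ℕ∞) ∨ ddist E v o ≤ (n : ℕ∞)) → g^[i] v = v := by
  intro n
  have hgE : ∀ x y, E x y → E (g x) (g y) := fun x y h => (hg_adj x y).mp h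
  obtain ⟨F, hFfin, hFne, hFim⟩ := hell
  -- Step 1: a power of g fixing F pointwise
  have hFmap : ∀ v ∈ F, g v ∈ F := fun v hv => hFim ▸ Set.mem_image_of_mem g hv
  obtain ⟨i₁, hi₁, hfix₁⟩ := exists_pow_fix hFfin hg_inj hFmap
  obtain ⟨x, hx⟩ := hFne
  set h := g^[i₁] with hh
  have hhx : h x = x := hfix₁ x hx
  have hh_inj : Function.Injective h := hg_inj.iterate i₁
  have hhE : ∀ u v, ddist E (h u) (h v) ≤ ddist E u v := ddist_iterate_le hgE i₁
  -- distance from o to x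
  have hr : ∃ r : ℕ, ddist E o x ≤ (r : ℕ∞) := by
    have := hroot x
    by_contra hcon
    push_neg at hcon
    apply this
    rw [ddist]
    rw [sInf_eq_top]
    rintro m ⟨k, rfl, hs⟩
    exact absurd ((ddist_le_iff E o x k).mpr hs) (not_le.mpr (hcon k))
  obtain ⟨r, hr⟩ := hr
  -- Step 2: a power of h fixing the in-ball of radius n+r around x pointwise
  set S₁ : Set V := {w : V | ddist E w x ≤ ((n + r : ℕ) : ℕ∞)} with hS₁
  have hS₁fin : S₁.Finite := (hballs x (n + r)).2
  have hS₁map : ∀ v ∈ S₁, h v ∈ S₁ := by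
    intro v hv
    have : ddist E (h v) (h x) ≤ ddist E v x := hhE v x
    rw [hhx] at this
    exact le_trans this hv
  obtain ⟨i₂, hi₂, hfix₂⟩ := exists_pow_fix hS₁fin hh_inj hS₁map
  set H := h^[i₂] with hH
  have hH_inj : Function.Injective H := hh_inj.iterate i₂
  have hHE : ∀ u v, ddist E (H u) (H v) ≤ ddist E u v := by
    intro u v
    rw [hH, hh, ← Function.iterate_mul]
    exact ddist_iterate_le hgE _ u v
  have ho_mem : o ∈ S₁ := by
    rw [hS₁, Set.mem_setOf_eq]
    exact le_trans hr (by exact_mod_cast Nat.le_add_left r n)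
  have hHo : H o = o := hfix₂ o ho_mem
  -- Step 3: a power of H fixing the out-ball of radius n around o pointwise
  set S₂ : Set V := {w : V | ddist E o w ≤ (n : ℕ∞)} with hS₂
  have hS₂fin : S₂.Finite := (hballs o n).1
  have hS₂map : ∀ v ∈ S₂, H v ∈ S₂ := by
    intro v hv
    have : ddist E (H o) (H v) ≤ ddist E o v := hHE o v
    rw [hHo] at this
    exact le_trans this hv
  obtain ⟨i₃, hi₃, hfix₃⟩ := exists_pow_fix hS₂fin hH_inj hS₂map
  refine ⟨i₁ * i₂ * i₃, Nat.one_le_iff_ne_zero.mpr (by positivity), ?_⟩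
  have hgiter : g^[i₁ * i₂ * i₃] = H^[i₃] := by
    rw [hH, hh, ← Function.iterate_mul, ← Function.iterate_mul, mul_assoc]
  intro v hv
  rw [hgiter]
  rcases hv with hv | hv
  · exact hfix₃ v hv
  · -- v is in the in-ball of radius n around o; triangle via x
    have h1 : StepsLe E n v o := (ddist_le_iff E v o n).mp hv
    have h2 : StepsLe E r o x := (ddist_le_iff E o x r).mp hr
    have h3 : StepsLe E (n + r) v x := stepsLe_trans E h1 h2
    have hvS₁ : v ∈ S₁ := (ddist_le_iff E v x (n + r)).mpr h3
    have hHv : H v = v := hfix₂ v hvS₁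
    exact Function.iterate_fixed hHv i₃
end
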